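/- arXiv:1806.06100 — 4 statements merged into one kernel-verified Lean document; each statement's English description precedes it below -/
import Mathlib

section
/- Let m be a positive integer and let f : {0,1}^m → [0,1] be an arbitrary function. Sample p uniformly from [0,1], and conditioned on p sample x_1, ..., x_m independently with x_i ~ Bernoulli(p). Then E[(f(x) − p) · Σ_{i=1}^m (x_i − p) + |f(x) − (1/m) Σ_{i=1}^m x_i|] ≥ 1/12. -/
/-!
Write `w_x(p)` for the probability of `x` under i.i.d. Bernoulli(`p`) bits and
`s_x(p) = Σᵢ (xᵢ - p)` for the score. Then `d/dp [p(1-p) w_x(p)] = w_x(p) (s_x(p) + 1 - 2p)`, and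
since `p(1-p)` vanishes at both ends of `[0,1]`, `E[g(x) (s + 1 - 2p)] = 0` for every `g`.
Together with `E[s | p] = 0` this gives
`E[(f - p) s + (1 - 2p)(f - x̄)] = E[p(2p - 1)] = 1/6`,
and `|f - x̄| ≥ (1 - 2p)(f - x̄)` because `|1 - 2p| ≤ 1`.
-/

open Finset

lemma mul_le_abs_of_abs_le_one {a : ℝ} (ha : |a| ≤ 1) (b : ℝ) : a * b ≤ |b| :=
  calc a * b ≤ |a| * |b| := by rw [← abs_mul]; exact le_abs_self _
    _ ≤ |b| := mul_le_of_le_one_left (abs_nonneg b) ha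

variable {ι : Type*} [Fintype ι]

noncomputable def bernoulliWeight (p : ℝ) (x : ι → Bool) : ℝ := ∏ i, if x i then p else 1 - p

noncomputable def bernoulliScore (p : ℝ) (x : ι → Bool) : ℝ :=
  ∑ i, ((if x i then (1 : ℝ) else 0) - p)

lemma bernoulliWeight_nonneg {p : ℝ} (hp : p ∈ Set.Icc (0 : ℝ) 1) (x : ι → Bool) :
    0 ≤ bernoulliWeight p x :=
  prod_nonneg fun i _ => by split_ifs <;> linarith [hp.1, hp.2]

@[fun_prop]
lemma continuous_bernoulliWeight (x : ι → Bool) : Continuous fun p => bernoulliWeight p x :=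
  continuous_finsetProd _ fun i _ => by split_ifs <;> fun_prop

@[fun_prop]
lemma continuous_bernoulliScore (x : ι → Bool) : Continuous fun p => bernoulliScore p x := by
  unfold bernoulliScore; fun_prop

lemma bernoulliWeight_eq_pow_mul_pow (p : ℝ) (x : ι → Bool) :
    bernoulliWeight p x = p ^ #{i | x i} * (1 - p) ^ #{i | ¬ x i} := by
  rw [bernoulliWeight, prod_ite, prod_const, prod_const]

lemma bernoulliScore_eq (p : ℝ) (x : ι → Bool) :
    bernoulliScore p x = #{i | x i} - (#{i | x i} + #{i | ¬ x i}) * p := by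
  rw [bernoulliScore, sum_sub_distrib, sum_boole, sum_const, nsmul_eq_mul,
    ← card_filter_add_card_filter_not (s := univ) (fun i => x i = true)]
  push_cast; ring

lemma sum_bernoulliWeight [DecidableEq ι] (p : ℝ) : ∑ x : ι → Bool, bernoulliWeight p x = 1 := by
  simp [bernoulliWeight, ← Fintype.prod_sum fun (_ : ι) (b : Bool) => if b then p else 1 - p]

lemma hasDerivAt_mul_one_sub_mul_bernoulliWeight (p : ℝ) (x : ι → Bool) :
    HasDerivAt (fun q => q * (1 - q) * bernoulliWeight q x)
      (bernoulliWeight p x * (bernoulliScore p x + (1 - 2 * p))) p := by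
  simp only [bernoulliWeight_eq_pow_mul_pow, bernoulliScore_eq]
  generalize #{i | x i} = k, #{i | ¬ x i} = l
  have hk : HasDerivAt (fun q : ℝ => q ^ (k + 1)) ((k + 1) * p ^ k) p := by
    simpa using hasDerivAt_pow (k + 1) p
  have hl : HasDerivAt (fun q : ℝ => (1 - q) ^ (l + 1)) ((l + 1) * (1 - p) ^ l * -1) p := by
    simpa using ((hasDerivAt_id p).const_sub 1).fun_pow (l + 1)
  have h_eq : (fun q : ℝ => q * (1 - q) * (q ^ k * (1 - q) ^ l))
      = fun q => q ^ (k + 1) * (1 - q) ^ (l + 1) := by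
    ext q; ring
  rw [h_eq]
  exact (hk.fun_mul hl).congr_deriv (by ring)

/-- Differentiate `∑ₓ q (1 - q) w_x(q) = q (1 - q)`. -/
lemma sum_bernoulliWeight_mul_bernoulliScore [DecidableEq ι] (p : ℝ) :
    ∑ x : ι → Bool, bernoulliWeight p x * bernoulliScore p x = 0 := by
  have h_sum := HasDerivAt.fun_sum fun (x : ι → Bool) (_ : x ∈ univ) =>
    hasDerivAt_mul_one_sub_mul_bernoulliWeight p x
  simp only [← mul_sum, sum_bernoulliWeight, mul_one] at h_sum
  have h_poly : HasDerivAt (fun q : ℝ => q * (1 - q)) (1 - 2 * p) p :=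
    ((hasDerivAt_id p).fun_mul ((hasDerivAt_id p).const_sub 1)).congr_deriv (by simp; ring)
  have h_unique := h_sum.unique h_poly
  simp only [mul_add, sum_add_distrib, ← sum_mul, sum_bernoulliWeight] at h_unique
  linarith

lemma integral_bernoulliWeight_mul_bernoulliScore_add (x : ι → Bool) :
    ∫ p in (0 : ℝ)..1, bernoulliWeight p x * (bernoulliScore p x + (1 - 2 * p)) = 0 := by
  rw [intervalIntegral.integral_eq_sub_of_hasDerivAt
    (fun p _ => hasDerivAt_mul_one_sub_mul_bernoulliWeight p x)
    (Continuous.intervalIntegrable (by fun_prop) _ _)]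
  simp

lemma sum_bernoulliWeight_mul_fingerprint [DecidableEq ι] [Nonempty ι]
    (g : (ι → Bool) → ℝ) (p : ℝ) :
    ∑ x : ι → Bool, bernoulliWeight p x * ((g x - p) * bernoulliScore p x +
        (1 - 2 * p) * (g x - (1 / Fintype.card ι) * ∑ i, if x i then (1 : ℝ) else 0)) =
      ∑ x, g x * (bernoulliWeight p x * (bernoulliScore p x + (1 - 2 * p))) + p * (2 * p - 1) := by
  have hn : (Fintype.card ι : ℝ) ≠ 0 := by positivity
  have h_summand (x : ι → Bool) : bernoulliWeight p x * ((g x - p) * bernoulliScore p x +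
      (1 - 2 * p) * (g x - (1 / Fintype.card ι) * ∑ i, if x i then (1 : ℝ) else 0)) =
      g x * (bernoulliWeight p x * (bernoulliScore p x + (1 - 2 * p)))
        - (p + (1 - 2 * p) / Fintype.card ι) * (bernoulliWeight p x * bernoulliScore p x)
        - p * (1 - 2 * p) * bernoulliWeight p x := by
    have h_count : ∑ i, (if x i then (1 : ℝ) else 0) = bernoulliScore p x + Fintype.card ι * p := by
      rw [bernoulliScore, sum_sub_distrib, sum_const, card_univ, nsmul_eq_mul]; ring
    rw [h_count]
    field_simp
    ring
  rw [sum_congr rfl fun x _ => h_summand x, sum_sub_distrib, sum_sub_distrib, ← mul_sum,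
    ← mul_sum, sum_bernoulliWeight_mul_bernoulliScore, sum_bernoulliWeight]
  ring

lemma integral_sum_bernoulliWeight_mul_fingerprint [DecidableEq ι] [Nonempty ι]
    (g : (ι → Bool) → ℝ) :
    ∫ p in (0 : ℝ)..1, ∑ x : ι → Bool, bernoulliWeight p x * ((g x - p) * bernoulliScore p x +
        (1 - 2 * p) * (g x - (1 / Fintype.card ι) * ∑ i, if x i then (1 : ℝ) else 0)) =
      1 / 6 := by
  simp only [sum_bernoulliWeight_mul_fingerprint]
  rw [intervalIntegral.integral_add (Continuous.intervalIntegrable (by fun_prop) _ _)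
      (Continuous.intervalIntegrable (by fun_prop) _ _),
    intervalIntegral.integral_finsetSum fun x _ => Continuous.intervalIntegrable (by fun_prop) _ _]
  simp only [intervalIntegral.integral_const_mul, integral_bernoulliWeight_mul_bernoulliScore_add,
    mul_zero, sum_const_zero, zero_add]
  have h_poly : (fun p : ℝ => p * (2 * p - 1)) = fun p => 2 * p ^ 2 - p := by ext p; ring
  rw [h_poly, intervalIntegral.integral_sub (Continuous.intervalIntegrable (by fun_prop) _ _)
    (Continuous.intervalIntegrable (by fun_prop) _ _)]
  norm_num [integral_pow]

theorem fingerprinting_lemma_general (m : ℕ) (hm : 0 < m)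
    (f : (Fin m → Bool) → ℝ) :
    (1 : ℝ) / 12 ≤
      ∫ p in (0 : ℝ)..1,
        ∑ x : Fin m → Bool,
          (∏ i, if x i then p else 1 - p) *
            ((f x - p) * (∑ i, ((if x i then (1 : ℝ) else 0) - p)) +
              |f x - (1 / m) * ∑ i, (if x i then (1 : ℝ) else 0)|) := by
  have : Nonempty (Fin m) := ⟨⟨0, hm⟩⟩
  simp only [← bernoulliWeight.eq_1, ← bernoulliScore.eq_1]
  have h_identity := integral_sum_bernoulliWeight_mul_fingerprint f
  simp only [Fintype.card_fin] at h_identity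
  calc (1 : ℝ) / 12 ≤ 1 / 6 := by norm_num
    _ = _ := h_identity.symm
    _ ≤ _ := by
      refine intervalIntegral.integral_mono_on zero_le_one
        (Continuous.intervalIntegrable (by fun_prop) _ _)
        (Continuous.intervalIntegrable (by fun_prop) _ _) fun p hp => ?_
      refine sum_le_sum fun x _ => mul_le_mul_of_nonneg_left ?_ (bernoulliWeight_nonneg hp x)
      have h_abs : |1 - 2 * p| ≤ 1 := abs_le.mpr ⟨by linarith [hp.2], by linarith [hp.1]⟩
      exact add_le_add_right (mul_le_abs_of_abs_le_one h_abs _) _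

/-- **Fingerprinting Lemma.**  For any `f : {0,1}^m → [0,1]`, if `p` is sampled uniformly
from `[0,1]` and, given `p`, the bits `x 1, …, x m` are i.i.d. `Bernoulli(p)`, then
`E[(f(x) − p) · Σᵢ (xᵢ − p) + |f(x) − (1/m) Σᵢ xᵢ|] ≥ 1/12`. -/
theorem fingerprinting_lemma (m : ℕ) (hm : 0 < m)
    (f : (Fin m → Bool) → ℝ) (hf : ∀ x, f x ∈ Set.Icc (0 : ℝ) 1) :
    (1 : ℝ) / 12 ≤
      ∫ p in (0 : ℝ)..1,
        ∑ x : Fin m → Bool,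
          (∏ i, if x i then p else 1 - p) *
            ((f x - p) * (∑ i, ((if x i then (1 : ℝ) else 0) - p)) +
              |f x - (1 / m) * ∑ i, (if x i then (1 : ℝ) else 0)|) :=
  fingerprinting_lemma_general m hm f
end

section
/- Let N be a positive integer, let A be a proper subset of {1,...,N}, and let f : {0,1}^{({1,...,N} \ A)} → [0,1] be an arbitrary function of the coordinates outside A. Sample p uniformly from [0,1], and conditioned on p sample x_i ~ Bernoulli(p) independently for each i ∉ A. Define x̄ ∈ {0,1}^N by x̄_i = x_i for i ∉ A and x̄_i = 0 for i ∈ A. Then E[(f(x) − p) · Σ_{i ∉ A} (x_i − p)] ≥ 1/12 − E[|f(x) − (1/N) Σ_{i=1}^N x̄_i|] − |A|/(N − |A|). -/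
/-!
Let `W_p(x) = ∏ᵢ p^{xᵢ} (1 - p)^{1 - xᵢ}` and `g(p) = E_p[f] = ∑ₓ W_p(x) f(x)`. The score identity
`p (1 - p) W_p'(x) = W_p(x) ∑ᵢ (xᵢ - p)`, together with `∑ₓ W_p'(x) = 0` (differentiate `∑ₓ W_p = 1`),
turns the correlation `∫₀¹ E_p[(f - p) ∑ᵢ (xᵢ - p)]` into `∫₀¹ p (1 - p) g'(p)`, which integrates by
parts to `∫₀¹ (2p - 1) g(p)`. Since the empirical mean has expectation `p`,
`|g(p) - p| ≤ E_p |f - mean|`, and `∫₀¹ (2p - 1) p = 1/6` yields the fingerprinting bound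
`1/6 - ∫₀¹ E_p |f - mean|`. Finally, averaging over all `N` coordinates with those in `A` set to `0`
instead of over the `N - |A|` free ones moves the mean by at most `|A| / (N - |A|)`.
-/

open Finset Set MeasureTheory

theorem abs_sub_one_div_mul_le {a s m n : ℝ} (hm : 0 < m) (hmn : m ≤ n) (hs : 0 ≤ s)
    (hsm : s ≤ m) : |a - 1 / m * s| ≤ |a - 1 / n * s| + (n - m) / m := by
  have hn : 0 < n := hm.trans_le hmn
  have hgap : |1 / n * s - 1 / m * s| ≤ (n - m) / m := by
    rw [abs_sub_comm, abs_of_nonneg (sub_nonneg.2 (mul_le_mul_of_nonneg_right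
      (one_div_le_one_div_of_le hm hmn) hs)), div_mul_eq_mul_div, div_mul_eq_mul_div,
      div_sub_div _ _ hm.ne' hn.ne', div_le_div_iff₀ (by positivity) hm]
    nlinarith [mul_nonneg (mul_nonneg (sub_nonneg.2 (hsm.trans hmn)) (sub_nonneg.2 hmn)) hm.le]
  linarith [abs_sub_le a (1 / n * s) (1 / m * s)]

theorem sum_dite_mem_zero {α M : Type*} [Fintype α] [AddCommMonoid M] (s : Finset α)
    [DecidablePred (· ∈ s)] (g : {a // a ∉ s} → M) :
    ∑ a, (if h : a ∈ s then 0 else g ⟨a, h⟩) = ∑ a, g a := by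
  rw [← Fintype.sum_subtype_add_sum_subtype (· ∈ s), sum_eq_zero fun a _ => dif_pos a.2, zero_add]
  exact sum_congr rfl fun a _ => dif_neg a.2

theorem integral_mul_one_sub_mul_deriv {g g' : ℝ → ℝ}
    (hg : ∀ p ∈ Icc (0 : ℝ) 1, HasDerivAt g (g' p) p) (hg' : IntervalIntegrable g' volume 0 1) :
    ∫ p in (0 : ℝ)..1, p * (1 - p) * g' p = ∫ p in (0 : ℝ)..1, (2 * p - 1) * g p := by
  have hu (p : ℝ) : HasDerivAt (fun q : ℝ => q * (1 - q)) (1 - 2 * p) p :=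
    ((hasDerivAt_id' p).fun_mul ((hasDerivAt_id' p).const_sub 1)).congr_deriv (by ring)
  rw [← Set.uIcc_of_le zero_le_one] at hg
  rw [intervalIntegral.integral_mul_deriv_eq_deriv_mul (fun p _ => hu p) hg
    (Continuous.intervalIntegrable (by fun_prop) _ _) hg']
  simp only [sub_self, mul_zero, zero_mul, sub_zero, zero_sub, ← intervalIntegral.integral_neg]
  congr with p
  ring

theorem integral_two_mul_sub_one_mul_self : ∫ p in (0 : ℝ)..1, (2 * p - 1) * p = 1 / 6 := by
  norm_num [sub_mul, mul_assoc, ← pow_two]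

namespace Fingerprinting

variable {ι : Type*} [Fintype ι]

noncomputable def bernoulliWeight (p : ℝ) (x : ι → Bool) : ℝ := ∏ i, if x i then p else 1 - p

theorem bernoulliWeight_nonneg {p : ℝ} (hp : p ∈ Icc (0 : ℝ) 1) (x : ι → Bool) :
    0 ≤ bernoulliWeight p x :=
  prod_nonneg fun i _ => by split_ifs <;> linarith [hp.1, hp.2]

theorem continuous_bernoulliWeight (x : ι → Bool) : Continuous fun p => bernoulliWeight p x :=
  continuous_finsetProd _ fun i _ =>
    continuous_if_const _ (fun _ => continuous_id) (fun _ => by fun_prop)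

variable [DecidableEq ι]

noncomputable def bernoulliExpect (p : ℝ) (h : (ι → Bool) → ℝ) : ℝ :=
  ∑ x, bernoulliWeight p x * h x

@[fun_prop]
theorem continuous_bernoulliExpect (h : (ι → Bool) → ℝ) :
    Continuous fun p => bernoulliExpect p h :=
  continuous_finsetSum _ fun x _ => (continuous_bernoulliWeight x).mul continuous_const

theorem sum_bernoulliWeight (p : ℝ) : ∑ x : ι → Bool, bernoulliWeight p x = 1 := by
  simp only [bernoulliWeight, ← Fintype.prod_sum (fun _ (b : Bool) => if b then p else 1 - p),
    Fintype.sum_bool, if_true, Bool.false_eq_true, if_false, add_sub_cancel, prod_const_one]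

theorem bernoulliExpect_const (p c : ℝ) : bernoulliExpect p (fun _ : ι → Bool => c) = c := by
  rw [bernoulliExpect, ← sum_mul, sum_bernoulliWeight, one_mul]

theorem bernoulliExpect_le_add {p c : ℝ} (hp : p ∈ Icc (0 : ℝ) 1) {h₁ h₂ : (ι → Bool) → ℝ}
    (h : ∀ x, h₁ x ≤ h₂ x + c) : bernoulliExpect p h₁ ≤ bernoulliExpect p h₂ + c := by
  calc bernoulliExpect p h₁ ≤ bernoulliExpect p (fun x => h₂ x + c) :=
        sum_le_sum fun x _ => mul_le_mul_of_nonneg_left (h x) (bernoulliWeight_nonneg hp x)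
    _ = bernoulliExpect p h₂ + c := by
        simp only [bernoulliExpect, mul_add, sum_add_distrib, ← sum_mul, sum_bernoulliWeight,
          one_mul]

theorem abs_bernoulliExpect_le {p : ℝ} (hp : p ∈ Icc (0 : ℝ) 1) (h : (ι → Bool) → ℝ) :
    |bernoulliExpect p h| ≤ bernoulliExpect p fun x => |h x| :=
  (abs_sum_le_sum_abs _ _).trans_eq <| sum_congr rfl fun x _ => by
    rw [abs_mul, abs_of_nonneg (bernoulliWeight_nonneg hp x)]

noncomputable def bernoulliWeightDeriv (p : ℝ) (x : ι → Bool) : ℝ :=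
  ∑ i, (∏ j ∈ univ.erase i, if x j then p else 1 - p) * if x i then 1 else -1

theorem hasDerivAt_bernoulliWeight (p : ℝ) (x : ι → Bool) :
    HasDerivAt (fun q => bernoulliWeight q x) (bernoulliWeightDeriv p x) p := by
  have hfactor (b : Bool) :
      HasDerivAt (fun q : ℝ => if b then q else 1 - q) (if b then 1 else -1) p := by
    cases b
    · simpa using (hasDerivAt_id' p).const_sub 1
    · simpa using hasDerivAt_id' p
  simpa [bernoulliWeight, bernoulliWeightDeriv] using
    HasDerivAt.fun_finsetProd (u := univ) fun i _ => hfactor (x i)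

theorem sum_bernoulliWeightDeriv (p : ℝ) : ∑ x : ι → Bool, bernoulliWeightDeriv p x = 0 := by
  have hsum : HasDerivAt (fun q => ∑ x : ι → Bool, bernoulliWeight q x)
      (∑ x, bernoulliWeightDeriv p x) p :=
    HasDerivAt.fun_sum fun x _ => hasDerivAt_bernoulliWeight p x
  simp only [sum_bernoulliWeight] at hsum
  exact hsum.unique (hasDerivAt_const p 1)

theorem continuous_bernoulliWeightDeriv (x : ι → Bool) :
    Continuous fun p => bernoulliWeightDeriv p x :=
  continuous_finsetSum _ fun i _ => (continuous_finsetProd _ fun j _ =>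
    continuous_if_const _ (fun _ => continuous_id) (fun _ => by fun_prop)).mul continuous_const

theorem mul_bernoulliWeightDeriv (p : ℝ) (x : ι → Bool) :
    p * (1 - p) * bernoulliWeightDeriv p x
      = bernoulliWeight p x * ∑ i, ((if x i then 1 else 0) - p) := by
  simp only [bernoulliWeightDeriv, bernoulliWeight, mul_sum]
  refine sum_congr rfl fun i _ => ?_
  rw [← mul_prod_erase univ _ (mem_univ i)]
  split_ifs <;> ring

theorem bernoulliExpect_sub (p : ℝ) (h₁ h₂ : (ι → Bool) → ℝ) :
    bernoulliExpect p (fun x => h₁ x - h₂ x) = bernoulliExpect p h₁ - bernoulliExpect p h₂ := by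
  simp only [bernoulliExpect, mul_sub, sum_sub_distrib]

theorem bernoulliExpect_const_mul (p c : ℝ) (h : (ι → Bool) → ℝ) :
    bernoulliExpect p (fun x => c * h x) = c * bernoulliExpect p h := by
  simp only [bernoulliExpect, mul_sum, mul_left_comm]

theorem bernoulliExpect_sum_sub_self (p : ℝ) :
    bernoulliExpect p (fun x : ι → Bool => ∑ i, ((if x i then 1 else 0) - p)) = 0 := by
  simp only [bernoulliExpect, ← mul_bernoulliWeightDeriv, ← mul_sum, sum_bernoulliWeightDeriv,
    mul_zero]

theorem bernoulliExpect_mean [Nonempty ι] (p : ℝ) :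
    bernoulliExpect p (fun x : ι → Bool => 1 / Fintype.card ι * ∑ i, if x i then 1 else 0) = p := by
  have hcard : (Fintype.card ι : ℝ) ≠ 0 := Nat.cast_ne_zero.2 Fintype.card_ne_zero
  have hsum := bernoulliExpect_sum_sub_self (ι := ι) p
  simp only [sum_sub_distrib, sum_const, card_univ, nsmul_eq_mul, bernoulliExpect_sub,
    bernoulliExpect_const] at hsum
  rw [bernoulliExpect_const_mul, sub_eq_zero.1 hsum]
  field_simp

theorem abs_bernoulliExpect_sub_le [Nonempty ι] {p : ℝ} (hp : p ∈ Icc (0 : ℝ) 1)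
    (h : (ι → Bool) → ℝ) :
    |bernoulliExpect p h - p|
      ≤ bernoulliExpect p fun x => |h x - 1 / Fintype.card ι * ∑ i, if x i then 1 else 0| := by
  have h := abs_bernoulliExpect_le hp
    fun x => h x - 1 / Fintype.card ι * ∑ i, if x i then (1 : ℝ) else 0
  rwa [bernoulliExpect_sub, bernoulliExpect_mean] at h

theorem hasDerivAt_bernoulliExpect (h : (ι → Bool) → ℝ) (p : ℝ) :
    HasDerivAt (fun q => bernoulliExpect q h) (∑ x, bernoulliWeightDeriv p x * h x) p :=
  HasDerivAt.fun_sum fun x _ => (hasDerivAt_bernoulliWeight p x).mul_const (h x)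

theorem bernoulliExpect_score (h : (ι → Bool) → ℝ) (p : ℝ) :
    bernoulliExpect p (fun x => (h x - p) * ∑ i, ((if x i then 1 else 0) - p))
      = p * (1 - p) * ∑ x, bernoulliWeightDeriv p x * h x := by
  simp only [sub_mul, bernoulliExpect_sub, bernoulliExpect_const_mul,
    bernoulliExpect_sum_sub_self, mul_zero, sub_zero]
  rw [bernoulliExpect, mul_sum]
  refine sum_congr rfl fun x _ => ?_
  rw [mul_left_comm, ← mul_bernoulliWeightDeriv]
  ring

theorem integral_bernoulliExpect_score (h : (ι → Bool) → ℝ) :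
    ∫ p in (0 : ℝ)..1, bernoulliExpect p (fun x => (h x - p) * ∑ i, ((if x i then 1 else 0) - p))
      = ∫ p in (0 : ℝ)..1, (2 * p - 1) * bernoulliExpect p h := by
  simp only [bernoulliExpect_score]
  exact integral_mul_one_sub_mul_deriv (fun p _ => hasDerivAt_bernoulliExpect h p)
    (Continuous.intervalIntegrable (continuous_finsetSum _ fun x _ =>
      (continuous_bernoulliWeightDeriv x).mul continuous_const) _ _)

theorem fingerprinting [Nonempty ι] (h : (ι → Bool) → ℝ) :
    1 / 6 - ∫ p in (0 : ℝ)..1,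
        bernoulliExpect p (fun x => |h x - 1 / Fintype.card ι * ∑ i, if x i then 1 else 0|)
      ≤ ∫ p in (0 : ℝ)..1,
        bernoulliExpect p (fun x => (h x - p) * ∑ i, ((if x i then 1 else 0) - p)) := by
  rw [integral_bernoulliExpect_score, ← integral_two_mul_sub_one_mul_self,
    ← intervalIntegral.integral_sub (Continuous.intervalIntegrable (by fun_prop) _ _)
      (Continuous.intervalIntegrable (by fun_prop) _ _)]
  refine intervalIntegral.integral_mono_on zero_le_one
    (Continuous.intervalIntegrable (by fun_prop) _ _)
    (Continuous.intervalIntegrable (by fun_prop) _ _) fun p hp => ?_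
  have hdev := abs_bernoulliExpect_sub_le hp h
  have hfactor : |2 * p - 1| ≤ 1 := abs_le.2 ⟨by linarith [hp.1], by linarith [hp.2]⟩
  have hprod : |(2 * p - 1) * (bernoulliExpect p h - p)| ≤ |bernoulliExpect p h - p| := by
    rw [abs_mul]
    exact mul_le_of_le_one_left (abs_nonneg _) hfactor
  linarith [neg_abs_le ((2 * p - 1) * (bernoulliExpect p h - p))]

theorem integral_bernoulliExpect_le_add {c : ℝ} {h₁ h₂ : (ι → Bool) → ℝ}
    (h : ∀ x, h₁ x ≤ h₂ x + c) :
    ∫ p in (0 : ℝ)..1, bernoulliExpect p h₁ ≤ (∫ p in (0 : ℝ)..1, bernoulliExpect p h₂) + c := by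
  have hmono := intervalIntegral.integral_mono_on (μ := volume) zero_le_one
    (Continuous.intervalIntegrable (by fun_prop) _ _)
    (Continuous.intervalIntegrable (by fun_prop : Continuous fun p => bernoulliExpect p h₂ + c) _ _)
    fun p hp => bernoulliExpect_le_add hp h
  rwa [intervalIntegral.integral_add (Continuous.intervalIntegrable (by fun_prop) _ _)
    intervalIntegrable_const, intervalIntegral.integral_const, sub_zero, one_smul] at hmono

end Fingerprinting

theorem abs_sub_mean_compl_le {N : ℕ} {A : Finset (Fin N)} (hA : A ⊂ Finset.univ) (y : ℝ)
    (x : {i : Fin N // i ∉ A} → Bool) :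
    |y - 1 / Fintype.card {i : Fin N // i ∉ A} * ∑ i, if x i then 1 else 0|
      ≤ |y - (1 / N) * ∑ i : Fin N, (if h : i ∈ A then 0 else (if x ⟨i, h⟩ then 1 else 0))|
        + (A.card : ℝ) / ((N : ℝ) - A.card) := by
  have hlt : A.card < N := by simpa using Finset.card_lt_card hA
  have hcard : (Fintype.card {i : Fin N // i ∉ A} : ℝ) = N - A.card := by
    rw [Fintype.card_subtype_compl, Fintype.card_fin, Fintype.card_coe, Nat.cast_sub hlt.le]
  rw [sum_dite_mem_zero A fun i => if x i then 1 else 0, hcard]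
  have hpos : (0 : ℝ) < N - A.card := sub_pos.2 (by exact_mod_cast hlt)
  have hbool (i) : (if x i then (1 : ℝ) else 0) ∈ Set.Icc 0 1 := by split_ifs <;> norm_num
  have hsum_le : ∑ i, (if x i then (1 : ℝ) else 0) ≤ N - A.card :=
    hcard ▸ (sum_le_card_nsmul _ _ 1 fun i _ => (hbool i).2).trans_eq (by simp)
  simpa only [sub_sub_cancel] using abs_sub_one_div_mul_le (a := y) hpos
    (sub_le_self _ (Nat.cast_nonneg _)) (sum_nonneg fun i _ => (hbool i).1) hsum_le

theorem fingerprinting_with_accused_general (N : ℕ)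
    (A : Finset (Fin N)) (hA : A ⊂ Finset.univ)
    (f : ({i : Fin N // i ∉ A} → Bool) → ℝ) :
    (1 : ℝ) / 12
      - (∫ p in (0 : ℝ)..1,
          ∑ x : {i : Fin N // i ∉ A} → Bool,
            (∏ i, if x i then p else 1 - p) *
              |f x - (1 / N) * ∑ i : Fin N,
                (if h : i ∈ A then 0 else (if x ⟨i, h⟩ then (1 : ℝ) else 0))|)
      - (A.card : ℝ) / ((N : ℝ) - A.card)
    ≤ ∫ p in (0 : ℝ)..1,
        ∑ x : {i : Fin N // i ∉ A} → Bool,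
          (∏ i, if x i then p else 1 - p) *
            ((f x - p) * ∑ i : {i : Fin N // i ∉ A}, ((if x i then (1 : ℝ) else 0) - p)) := by
  have : Nonempty {i : Fin N // i ∉ A} := by
    obtain ⟨i, -, hi⟩ := Finset.exists_of_ssubset hA
    exact ⟨⟨i, hi⟩⟩
  have hfp := Fingerprinting.fingerprinting f
  have hacc := Fingerprinting.integral_bernoulliExpect_le_add
    fun x => abs_sub_mean_compl_le hA (f x) x
  simp only [Fingerprinting.bernoulliExpect, Fingerprinting.bernoulliWeight] at hfp hacc
  linarith

/-- Per-round consequence of the Fingerprinting Lemma.  Let `A ⊊ [N]`, and let `f` be a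
`[0,1]`-valued function of the coordinates outside `A`.  Sample `p` uniformly from `[0,1]`
and, given `p`, sample `x i ~ Bernoulli(p)` i.i.d. for `i ∉ A`.  Let `x̄ ∈ {0,1}^N` agree
with `x` outside `A` and be `0` on `A`.  Then
`E[(f(x) − p) · Σ_{i ∉ A} (xᵢ − p)] ≥ 1/12 − E[|f(x) − (1/N) Σᵢ x̄ᵢ|] − |A|/(N − |A|)`. -/
theorem fingerprinting_with_accused (N : ℕ) (hN : 0 < N)
    (A : Finset (Fin N)) (hA : A ⊂ Finset.univ)
    (f : ({i : Fin N // i ∉ A} → Bool) → ℝ)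
    (hf : ∀ x, f x ∈ Set.Icc (0 : ℝ) 1) :
    (1 : ℝ) / 12
      - (∫ p in (0 : ℝ)..1,
          ∑ x : {i : Fin N // i ∉ A} → Bool,
            (∏ i, if x i then p else 1 - p) *
              |f x - (1 / N) * ∑ i : Fin N,
                (if h : i ∈ A then 0 else (if x ⟨i, h⟩ then (1 : ℝ) else 0))|)
      - (A.card : ℝ) / ((N : ℝ) - A.card)
    ≤ ∫ p in (0 : ℝ)..1,
        ∑ x : {i : Fin N // i ∉ A} → Bool,
          (∏ i, if x i then p else 1 - p) *
            ((f x - p) * ∑ i : {i : Fin N // i ∉ A}, ((if x i then (1 : ℝ) else 0) - p)) :=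
  fingerprinting_with_accused_general N A hA f
end

section
/- Let k ≥ 4 be an integer and let ℓ = ⌊(k/8) log₂ k⌋. Let W be a random variable taking values in an arbitrary measurable space, let R be uniformly distributed on {0, 1, ..., k!−1} and independent of W, let s = R mod 2^ℓ, and let U be uniformly distributed on {0, 1, ..., 2^ℓ−1} and independent of W. Then the total variation distance between the joint distributions of (W, s) and (W, U) is at most k^{−k/8}. -/
/-!
Independence of `W` from the second coordinate gives
`|P((W, X) ∈ E) - P((W, Y) ∈ E)| ≤ ∑ u, |P(X = u) - P(Y = u)|`. Among `0, …, N - 1` there are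
`⌊N / n⌋` or `⌊N / n⌋ + 1` numbers congruent to `u` modulo `n`, so with `N = k!` and `n = 2^ℓ`
each term is at most `1 / k!` and the sum at most `2^ℓ / k!`. Finally `2^(8ℓ) ≤ k^k ≤ (k!)^4`,
the second inequality from `k! ≥ (⌊k/2⌋ + 1)^⌈k/2⌉`, whence `2^ℓ · k^(k/8) ≤ k!`.
-/

open MeasureTheory ProbabilityTheory Nat Finset
open scoped ENNReal

lemma card_filter_mod_eq {N n u : ℕ} (hn : 0 < n) (hu : u < n) :
    #{r ∈ range N | r % n = u} = N / n + if u < N % n then 1 else 0 := by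
  have hcount := Nat.count_modEq_card N hn u
  rw [Nat.count_eq_card_filter_range, Nat.mod_eq_of_lt hu] at hcount
  simpa [Nat.ModEq, Nat.mod_eq_of_lt hu] using hcount

lemma abs_card_filter_mod_eq_sub_div_le {N n u : ℕ} (hn : 0 < n) (hu : u < n) :
    |(#{r ∈ range N | r % n = u} : ℝ) - N / n| ≤ 1 := by
  have hn' : (0 : ℝ) < n := by exact_mod_cast hn
  have hdiv : (N : ℝ) / n = (N / n : ℕ) + (N % n : ℕ) / n := by
    field_simp
    exact_mod_cast (Nat.div_add_mod N n).symm
  have hfrac : (N % n : ℕ) / (n : ℝ) < 1 :=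
    (div_lt_one hn').2 (by exact_mod_cast Nat.mod_lt N hn)
  have hfrac0 : 0 ≤ (N % n : ℕ) / (n : ℝ) := by positivity
  rw [card_filter_mod_eq hn hu, hdiv, abs_le]
  split_ifs <;> push_cast <;> constructor <;> linarith

lemma pow_self_le_factorial_pow_four (k : ℕ) : k ^ k ≤ k ! ^ 4 := by
  set m := k / 2
  have hsq : k ≤ (m + 1) ^ 2 := by
    have : k ≤ 2 * m + 1 := by omega
    nlinarith
  have hfact : (m + 1) ^ (k - m) ≤ k ! := by
    have h := Nat.factorial_mul_pow_le_factorial (m := m) (n := k - m)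
    rw [Nat.add_sub_cancel' (Nat.div_le_self k 2)] at h
    exact (Nat.le_mul_of_pos_left _ (Nat.factorial_pos m)).trans h
  calc k ^ k ≤ ((m + 1) ^ 2) ^ k := Nat.pow_le_pow_left hsq k
    _ = (m + 1) ^ (2 * k) := by rw [← pow_mul]
    _ ≤ (m + 1) ^ (4 * (k - m)) := Nat.pow_le_pow_right m.succ_pos (by omega)
    _ = ((m + 1) ^ (k - m)) ^ 4 := by rw [← pow_mul, mul_comm]
    _ ≤ k ! ^ 4 := Nat.pow_le_pow_left hfact 4

lemma two_pow_eight_mul_le_pow_self {k ℓ : ℕ} (hk : 0 < k)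
    (hℓ : (ℓ : ℝ) ≤ (k / 8 : ℝ) * Real.logb 2 k) :
    2 ^ (8 * ℓ) ≤ k ^ k := by
  have hk' : (0 : ℝ) < k := by exact_mod_cast hk
  have hlog : ((8 * ℓ : ℕ) : ℝ) ≤ Real.logb 2 ((k : ℝ) ^ k) := by
    rw [Real.logb_pow]
    push_cast
    linarith
  rw [Real.le_logb_iff_rpow_le one_lt_two (by positivity), Real.rpow_natCast] at hlog
  exact_mod_cast hlog

lemma two_pow_div_factorial_le {k ℓ : ℕ} (hk : 0 < k)
    (hℓ : (ℓ : ℝ) ≤ (k / 8 : ℝ) * Real.logb 2 k) :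
    (2 ^ ℓ : ℝ) / k ! ≤ (k : ℝ) ^ (-(k : ℝ) / 8) := by
  have hk' : (0 : ℝ) < k := by exact_mod_cast hk
  set x := (k : ℝ) ^ ((k : ℝ) / 8)
  have hx : 0 < x := Real.rpow_pos_of_pos hk' _
  have hx8 : x ^ 8 = (k : ℝ) ^ k := by
    rw [← Real.rpow_natCast x, ← Real.rpow_mul hk'.le, ← Real.rpow_natCast]
    ring_nf
  have key : ((2 : ℝ) ^ ℓ * x) ^ 8 ≤ (k ! : ℝ) ^ 8 := by
    rw [mul_pow, hx8, ← pow_mul, mul_comm ℓ 8]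
    have hfact := pow_self_le_factorial_pow_four k
    have h := Nat.mul_le_mul ((two_pow_eight_mul_le_pow_self hk hℓ).trans hfact) hfact
    rw [← pow_add] at h
    exact_mod_cast h
  rw [neg_div, Real.rpow_neg hk'.le, div_le_iff₀ (by positivity), inv_mul_eq_div,
    le_div_iff₀ hx]
  exact (pow_le_pow_iff_left₀ (by positivity) (by positivity) (by norm_num)).1 key

section Probability

variable {Ω : Type*} [MeasurableSpace Ω] {μ : Measure Ω}

lemma ae_lt_of_measure_eq_inv [IsProbabilityMeasure μ] {X : Ω → ℕ} (hX : Measurable X)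
    {N : ℕ} (hN : N ≠ 0) (hunif : ∀ r < N, μ {ω | X ω = r} = (N : ℝ≥0∞)⁻¹) :
    ∀ᵐ ω ∂μ, X ω < N := by
  have hfiber : ∀ r < N, μ (X ⁻¹' {r}) = (N : ℝ≥0∞)⁻¹ := hunif
  have hmass : μ (X ⁻¹' ↑(range N)) = 1 := by
    rw [← sum_measure_preimage_singleton _ fun r _ => hX (measurableSet_singleton r),
      sum_congr rfl fun r hr => hfiber r (mem_range.1 hr), sum_const,
      card_range, nsmul_eq_mul]
    exact ENNReal.mul_inv_cancel (by exact_mod_cast hN) (ENNReal.natCast_ne_top N)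
  rw [ae_iff_measure_eq (p := fun ω => X ω < N) (hX measurableSet_Iio).nullMeasurableSet,
    measure_univ]
  convert hmass using 2
  ext ω
  simp

lemma measure_preimage_eq_card_filter_mul_inv [IsProbabilityMeasure μ] {X : Ω → ℕ}
    (hX : Measurable X) {N : ℕ} (hN : N ≠ 0)
    (hunif : ∀ r < N, μ {ω | X ω = r} = (N : ℝ≥0∞)⁻¹) (p : ℕ → Prop) [DecidablePred p] :
    μ {ω | p (X ω)} = #{r ∈ range N | p r} * (N : ℝ≥0∞)⁻¹ := by
  have hfiber : ∀ r < N, μ (X ⁻¹' {r}) = (N : ℝ≥0∞)⁻¹ := hunif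
  have hae : {ω | p (X ω)} =ᵐ[μ] X ⁻¹' ↑{r ∈ range N | p r} := by
    filter_upwards [ae_lt_of_measure_eq_inv hX hN hunif] with ω hω
    change p (X ω) = (X ω ∈ _)
    simp [hω]
  rw [measure_congr hae,
    ← sum_measure_preimage_singleton _ fun r _ => hX (measurableSet_singleton r),
    sum_congr rfl fun r hr => hfiber r (mem_range.1 (mem_filter.1 hr).1), sum_const,
    nsmul_eq_mul]

lemma abs_measureReal_mod_eq_sub_inv_le [IsProbabilityMeasure μ] {R : Ω → ℕ}
    (hR : Measurable R) {N : ℕ} (hN : N ≠ 0)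
    (hunif : ∀ r < N, μ {ω | R ω = r} = (N : ℝ≥0∞)⁻¹) {n u : ℕ} (hn : 0 < n) (hu : u < n) :
    |μ.real {ω | R ω % n = u} - (n : ℝ)⁻¹| ≤ (N : ℝ)⁻¹ := by
  have hN' : (0 : ℝ) < N := by exact_mod_cast Nat.pos_of_ne_zero hN
  have hlaw : μ.real {ω | R ω % n = u} = #{r ∈ range N | r % n = u} / (N : ℝ) := by
    rw [measureReal_def, measure_preimage_eq_card_filter_mul_inv hR hN hunif (· % n = u),
      ENNReal.toReal_mul, ENNReal.toReal_inv, ENNReal.toReal_natCast, ENNReal.toReal_natCast,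
      div_eq_mul_inv]
  have hsplit : (#{r ∈ range N | r % n = u} : ℝ) / N - (n : ℝ)⁻¹
      = ((#{r ∈ range N | r % n = u} : ℝ) - N / n) / N := by
    field_simp
  rw [hlaw, hsplit, abs_div, abs_of_pos hN', ← one_div]
  exact div_le_div_of_nonneg_right (abs_card_filter_mod_eq_sub_div_le hn hu) hN'.le

variable {β α : Type*} [MeasurableSpace β] [MeasurableSpace α] [MeasurableSingletonClass α]

lemma measureReal_prodMk_mem_eq_sum [IsFiniteMeasure μ] {W : Ω → β} {X : Ω → α}
    (hW : Measurable W) (hX : Measurable X) (hind : IndepFun W X μ) {s : Finset α}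
    (hXs : ∀ᵐ ω ∂μ, X ω ∈ s) {E : Set (β × α)} (hE : MeasurableSet E) :
    μ.real {ω | (W ω, X ω) ∈ E}
      = ∑ a ∈ s, μ.real (W ⁻¹' {b | (b, a) ∈ E}) * μ.real {ω | X ω = a} := by
  have hsec : ∀ a, MeasurableSet {b | (b, a) ∈ E} := fun a => measurable_prodMk_right hE
  have hae : {ω | (W ω, X ω) ∈ E} =ᵐ[μ] ⋃ a ∈ s, W ⁻¹' {b | (b, a) ∈ E} ∩ X ⁻¹' {a} := by
    filter_upwards [hXs] with ω hω
    change ((W ω, X ω) ∈ E) = (ω ∈ ⋃ a ∈ s, _)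
    simp [hω]
  have hdisj : Set.PairwiseDisjoint ↑s fun a => W ⁻¹' {b | (b, a) ∈ E} ∩ X ⁻¹' {a} :=
    fun a _ a' _ haa' => Set.disjoint_left.2 fun ω ha ha' => haa' (ha.2.symm.trans ha'.2)
  rw [measureReal_congr hae, measureReal_biUnion_finset hdisj fun a _ =>
    (hW (hsec a)).inter (hX (measurableSet_singleton a))]
  refine sum_congr rfl fun a _ => ?_
  simp only [measureReal_def,
    hind.measure_inter_preimage_eq_mul _ _ (hsec a) (measurableSet_singleton a),
    ENNReal.toReal_mul]
  rfl

lemma abs_measureReal_prodMk_mem_sub_le [IsProbabilityMeasure μ] {W : Ω → β} {X Y : Ω → α}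
    (hW : Measurable W) (hX : Measurable X) (hY : Measurable Y)
    (hindX : IndepFun W X μ) (hindY : IndepFun W Y μ) {s : Finset α}
    (hXs : ∀ᵐ ω ∂μ, X ω ∈ s) (hYs : ∀ᵐ ω ∂μ, Y ω ∈ s) {E : Set (β × α)} (hE : MeasurableSet E) :
    |μ.real {ω | (W ω, X ω) ∈ E} - μ.real {ω | (W ω, Y ω) ∈ E}|
      ≤ ∑ a ∈ s, |μ.real {ω | X ω = a} - μ.real {ω | Y ω = a}| := by
  rw [measureReal_prodMk_mem_eq_sum hW hX hindX hXs hE,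
    measureReal_prodMk_mem_eq_sum hW hY hindY hYs hE, ← sum_sub_distrib]
  refine (abs_sum_le_sum_abs _ _).trans (sum_le_sum fun a _ => ?_)
  rw [← mul_sub, abs_mul, abs_of_nonneg measureReal_nonneg]
  exact mul_le_of_le_one_left (abs_nonneg _) measureReal_le_one

end Probability

/-- The `ℓ = ⌊(k/8) log₂ k⌋` least significant bits of a uniform element of
`{0, …, k!−1}`, together with any independent side information `W`, are within total
variation distance `k^{−k/8}` of `(W, uniform)`.  Total variation distance is expressed in
its equivalent form as the supremum over measurable events of the difference of
probabilities. -/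
theorem joint_lsb_close_to_uniform
    {Ω W : Type*} [MeasurableSpace Ω] [MeasurableSpace W]
    (μ : Measure Ω) [IsProbabilityMeasure μ]
    (k ℓ : ℕ) (hk : 4 ≤ k) (hℓ : (ℓ : ℤ) = ⌊(k / 8 : ℝ) * Real.logb 2 k⌋)
    (Wf : Ω → W) (R U : Ω → ℕ)
    (hW : Measurable Wf) (hR : Measurable R) (hU : Measurable U)
    (hRunif : ∀ r < k !, μ {ω | R ω = r} = ((k ! : ENNReal))⁻¹)
    (hUunif : ∀ u < 2 ^ ℓ, μ {ω | U ω = u} = ((2 ^ ℓ : ENNReal))⁻¹)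
    (hindR : IndepFun Wf R μ) (hindU : IndepFun Wf U μ) :
    ∀ E : Set (W × ℕ), MeasurableSet E →
      |(μ {ω | (Wf ω, R ω % 2 ^ ℓ) ∈ E}).toReal - (μ {ω | (Wf ω, U ω) ∈ E}).toReal|
        ≤ (k : ℝ) ^ (-(k : ℝ) / 8) := by
  intro E hE
  have hn : 0 < 2 ^ ℓ := by positivity
  have hUunif' : ∀ u < 2 ^ ℓ, μ {ω | U ω = u} = ((2 ^ ℓ : ℕ) : ℝ≥0∞)⁻¹ := fun u hu => by
    rw [hUunif u hu, Nat.cast_pow, Nat.cast_ofNat]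
  have hUlaw : ∀ u < 2 ^ ℓ, μ.real {ω | U ω = u} = ((2 ^ ℓ : ℕ) : ℝ)⁻¹ := fun u hu => by
    rw [measureReal_def, hUunif' u hu, ENNReal.toReal_inv, ENNReal.toReal_natCast]
  have hmod : Measurable fun r : ℕ => r % 2 ^ ℓ := measurable_from_top
  have hRmod : ∀ᵐ ω ∂μ, R ω % 2 ^ ℓ ∈ range (2 ^ ℓ) :=
    ae_of_all _ fun ω => mem_range.2 (Nat.mod_lt _ hn)
  have hUlt : ∀ᵐ ω ∂μ, U ω ∈ range (2 ^ ℓ) :=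
    (ae_lt_of_measure_eq_inv hU hn.ne' hUunif').mono fun ω => mem_range.2
  have hℓ' : (ℓ : ℝ) ≤ (k / 8 : ℝ) * Real.logb 2 k := by
    exact_mod_cast hℓ ▸ Int.floor_le ((k / 8 : ℝ) * Real.logb 2 k)
  calc _ ≤ ∑ u ∈ range (2 ^ ℓ), |μ.real {ω | R ω % 2 ^ ℓ = u} - μ.real {ω | U ω = u}| :=
        abs_measureReal_prodMk_mem_sub_le hW (hmod.comp hR) hU (hindR.comp measurable_id hmod)
          hindU hRmod hUlt hE
    _ ≤ ∑ u ∈ range (2 ^ ℓ), ((k ! : ℕ) : ℝ)⁻¹ := sum_le_sum fun u hu => by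
        rw [hUlaw u (mem_range.1 hu)]
        exact abs_measureReal_mod_eq_sub_inv_le hR k.factorial_ne_zero hRunif hn
          (mem_range.1 hu)
    _ = (2 ^ ℓ : ℝ) / k ! := by simp [div_eq_mul_inv]
    _ ≤ (k : ℝ) ^ (-(k : ℝ) / 8) := two_pow_div_factorial_le (by omega) hℓ'
end

section
/- Let α be a linearly ordered type, let y_1, ..., y_n be n distinct elements of α, let σ be a uniformly random permutation of {1,...,n}, and let X_i = y_{σ(i)} for each i. Fix 1 ≤ k ≤ n, and let Π be the unique permutation of {1,...,k} that sorts (X_1,...,X_k), i.e., X_{Π(1)} < X_{Π(2)} < ⋯ < X_{Π(k)}. Then Π is uniformly distributed on the symmetric group on {1,...,k} and is independent of the tuple (X_{k+1}, ..., X_n). -/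
/-!
Permuting the first `k` positions of `σ` by `τ` (that is, replacing `σ` by `σ * τ`, with `τ`
extended by the identity on the last `n - k` positions) leaves the tail `X_{k+1}, …, X_n`
unchanged and turns the sorting permutation `Π` of the head into `τ⁻¹ * Π`. Hence, inside every
event determined by the tail, the `k!` fibres of `Π` are translates of each other and have the
same size.
-/

open Nat Finset

theorem Tuple.sort_comp_perm {n : ℕ} {α : Type*} [LinearOrder α] {f : Fin n → α}
    (hf : Function.Injective f) (τ : Equiv.Perm (Fin n)) :
    Tuple.sort (f ∘ τ) = τ⁻¹ * Tuple.sort f := by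
  refine (Tuple.eq_sort_iff.2 ⟨?_, fun i j hij hfij => ?_⟩).symm
  · have hcomp : (f ∘ τ) ∘ ⇑(τ⁻¹ * Tuple.sort f) = f ∘ Tuple.sort f := by
      funext i
      simp
    exact hcomp ▸ Tuple.monotone_sort f
  · exact absurd ((τ⁻¹ * Tuple.sort f).injective (τ.injective (hf hfij))) hij.ne

section Equivariant

variable {G H : Type*} [Group G] [DecidableEq G] [Group H] (ρ : G →* H) (f : H → G)
  (hf : ∀ h g, f (h * ρ g) = g⁻¹ * f h) (s : Finset H) (hs : ∀ h g, h * ρ g ∈ s ↔ h ∈ s)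
include hf hs

theorem card_filter_eq_of_mul_right_equivariant (g₁ g₂ : G) :
    #{h ∈ s | f h = g₁} = #{h ∈ s | f h = g₂} := by
  have translate : ∀ a b : G, ∀ h ∈ {h ∈ s | f h = a}, h * ρ (a * b⁻¹) ∈ {h ∈ s | f h = b} := by
    intro a b h hh
    rw [mem_filter] at hh ⊢
    rw [hs, hf, hh.2]
    exact ⟨hh.1, by group⟩
  refine card_nbij' (· * ρ (g₁ * g₂⁻¹)) (· * ρ (g₂ * g₁⁻¹)) (translate g₁ g₂) (translate g₂ g₁)
    ?_ ?_ <;>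
  · intro h _
    simp [mul_assoc, ← map_mul]

theorem card_mul_card_filter_eq_of_mul_right_equivariant [Fintype G] (g : G) :
    Fintype.card G * #{h ∈ s | f h = g} = #s := by
  calc Fintype.card G * #{h ∈ s | f h = g} = ∑ g' : G, #{h ∈ s | f h = g'} := by
        rw [sum_congr rfl fun g' _ => card_filter_eq_of_mul_right_equivariant ρ f hf s hs g' g,
          sum_const, smul_eq_mul, Finset.card_univ]
    _ = #s := (card_eq_sum_card_fiberwise fun _ _ => mem_univ _).symm

end Equivariant

section HeadTail

variable {n k : ℕ} (hkn : k ≤ n)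

theorem Fin.extendDomain_castLEquiv_apply_castLE (τ : Equiv.Perm (Fin k)) (i : Fin k) :
    τ.extendDomain (Fin.castLEquiv hkn) (Fin.castLE hkn i) = Fin.castLE hkn (τ i) := by
  simpa using Equiv.Perm.extendDomain_apply_image τ (Fin.castLEquiv hkn) i

theorem Fin.extendDomain_castLEquiv_apply_of_le (τ : Equiv.Perm (Fin k)) {j : Fin n}
    (hj : k ≤ j) : τ.extendDomain (Fin.castLEquiv hkn) j = j :=
  Equiv.Perm.extendDomain_apply_not_subtype τ (Fin.castLEquiv hkn) (by simpa using hj)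

theorem Tuple.sort_head_mul_extendDomain {α : Type*} [LinearOrder α] {y : Fin n → α}
    (hy : Function.Injective y) (σ : Equiv.Perm (Fin n)) (τ : Equiv.Perm (Fin k)) :
    Tuple.sort (fun i : Fin k => y ((σ * τ.extendDomain (Fin.castLEquiv hkn)) (Fin.castLE hkn i)))
      = τ⁻¹ * Tuple.sort (fun i : Fin k => y (σ (Fin.castLE hkn i))) := by
  have hhead : (fun i : Fin k => y ((σ * τ.extendDomain (Fin.castLEquiv hkn)) (Fin.castLE hkn i)))
      = (fun i : Fin k => y (σ (Fin.castLE hkn i))) ∘ τ := by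
    funext i
    rw [Function.comp_apply, Equiv.Perm.mul_apply, Fin.extendDomain_castLEquiv_apply_castLE]
  rw [hhead]
  exact Tuple.sort_comp_perm (hy.comp (σ.injective.comp (Fin.castLE_injective hkn))) τ

end HeadTail

/-- When a tuple of `n` distinct elements is uniformly randomly permuted, the permutation
`Π` sorting the first `k` entries is uniform on the symmetric group of `{1,…,k}` and
independent of the remaining entries `(X_{k+1}, …, X_n)`.  Uniformity and independence are
expressed by counting: `Pr[Π = π] = 1/k!` and
`Pr[Π = π ∧ tail = v] = (1/k!) · Pr[tail = v]` for all `π` and `v`. -/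
theorem sort_perm_uniform_indep_tail
    {α : Type*} [LinearOrder α] (n k : ℕ) (hkn : k ≤ n)
    (y : Fin n → α) (hy : Function.Injective y) :
    (∀ π : Equiv.Perm (Fin k),
      k ! * (Finset.univ.filter (fun σ : Equiv.Perm (Fin n) =>
          Tuple.sort (fun i : Fin k => y (σ (Fin.castLE hkn i))) = π)).card = n !)
    ∧ (∀ (π : Equiv.Perm (Fin k)) (v : Fin (n - k) → α),
      k ! * (Finset.univ.filter (fun σ : Equiv.Perm (Fin n) =>
          Tuple.sort (fun i : Fin k => y (σ (Fin.castLE hkn i))) = π ∧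
          (fun i : Fin (n - k) => y (σ ⟨k + (i : ℕ), by omega⟩)) = v)).card
        = (Finset.univ.filter (fun σ : Equiv.Perm (Fin n) =>
            (fun i : Fin (n - k) => y (σ ⟨k + (i : ℕ), by omega⟩)) = v)).card) := by
  have count := card_mul_card_filter_eq_of_mul_right_equivariant
    (Equiv.Perm.extendDomainHom (Fin.castLEquiv hkn))
    (fun σ : Equiv.Perm (Fin n) => Tuple.sort fun i : Fin k => y (σ (Fin.castLE hkn i)))
    (Tuple.sort_head_mul_extendDomain hkn hy)
  constructor
  · intro π
    simpa [Fintype.card_perm] using count univ (by simp) π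
  · intro π v
    have htail : ∀ (σ : Equiv.Perm (Fin n)) (τ : Equiv.Perm (Fin k)),
        (fun i : Fin (n - k) =>
          y ((σ * τ.extendDomain (Fin.castLEquiv hkn)) ⟨k + (i : ℕ), by omega⟩))
        = fun i : Fin (n - k) => y (σ ⟨k + (i : ℕ), by omega⟩) := by
      intro σ τ
      funext i
      rw [Equiv.Perm.mul_apply, Fin.extendDomain_castLEquiv_apply_of_le hkn τ (by simp)]
    simpa [Fintype.card_perm, filter_filter, and_comm] using
      count {σ | (fun i : Fin (n - k) => y (σ ⟨k + (i : ℕ), by omega⟩)) = v}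
        (fun σ τ => by
          simp only [mem_filter, mem_univ, true_and, Equiv.Perm.extendDomainHom_apply, htail]) π
end
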